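/- Fix an integer e>1, a charge (s_0,s_1)∈ℤ², and (v_0,v_1)∈{0,…,e−1}² with v_0 ≡ s_0 (mod e) and v_1 ≡ s_1 (mod e). If s_0 − s_1 > n − 1 − e, then the set of Uglov bipartitions for (s_0,s_1) coincides with the set of positive Kleshchev bipartitions: Φ_{e,n}^{(s_0,s_1)} = Φ_{e,n}^{(v_0,v_1)+}. -/

import Mathlib

open Finset

/-- A node `(a, b, c)`: row index `a ≥ 1`, column index `b ≥ 1`, component `c ∈ {0,1}`. -/
abbrev Node : Type := ℕ × ℕ × Fin 2

namespace UglovPaper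

/-- Row index of a node. -/
def nrow (γ : Node) : ℕ := γ.1

/-- Column index of a node. -/
def ncol (γ : Node) : ℕ := γ.2.1

/-- Component of a node. -/
def ncomp (γ : Node) : Fin 2 := γ.2.2

/-- A finite set of nodes is the Young diagram of a bipartition iff all indices are `≥ 1`
and the set is closed under moving left in a row and up in a column (in each component). -/
def IsDiagram (D : Finset Node) : Prop :=
  (∀ γ ∈ D, 1 ≤ nrow γ ∧ 1 ≤ ncol γ) ∧
  (∀ γ ∈ D, ∀ b' : ℕ, 1 ≤ b' → b' ≤ ncol γ → (nrow γ, b', ncomp γ) ∈ D) ∧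
  (∀ γ ∈ D, 2 ≤ nrow γ → (nrow γ - 1, ncol γ, ncomp γ) ∈ D)

/-- `part D c a` is the `a`-th part `λ^(c)_a` of the bipartition with diagram `D`. -/
def part (D : Finset Node) (c : Fin 2) (a : ℕ) : ℕ :=
  (D.filter (fun γ => nrow γ = a ∧ ncomp γ = c)).card

/-- The content `b - a + s_c` of a node `(a,b,c)` for the charge `s`. -/
def cont (s : Fin 2 → ℤ) (γ : Node) : ℤ := (ncol γ : ℤ) - (nrow γ : ℤ) + s (ncomp γ)

/-- The residue mod `e` of a node for the charge `s`. -/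
def res (e : ℕ) (s : Fin 2 → ℤ) (γ : Node) : ZMod e := ((cont s γ : ℤ) : ZMod e)

/-- The order `γ <_{(s₀,s₁)} γ'` on nodes. -/
def chargeLT (s : Fin 2 → ℤ) (γ γ' : Node) : Prop :=
  cont s γ < cont s γ' ∨ (cont s γ = cont s γ' ∧ ncomp γ' < ncomp γ)

/-- The positive asymptotic order `γ <_{(v₀,v₁)₊} γ'`. -/
def posLT (γ γ' : Node) : Prop :=
  ncomp γ' < ncomp γ ∨ (ncomp γ = ncomp γ' ∧ nrow γ' < nrow γ)

/-- The negative asymptotic order `γ <_{(v₀,v₁)₋} γ'`. -/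
def negLT (γ γ' : Node) : Prop :=
  ncomp γ < ncomp γ' ∨ (ncomp γ = ncomp γ' ∧ nrow γ' < nrow γ)

/-- `γ` is a removable node of the diagram `D`. -/
def Removable (D : Finset Node) (γ : Node) : Prop := γ ∈ D ∧ IsDiagram (D.erase γ)

/-- `γ` is an addable node of the diagram `D`. -/
def Addable (D : Finset Node) (γ : Node) : Prop := γ ∉ D ∧ IsDiagram (insert γ D)

/-- `γ` is a normal `i`-node of `D` with respect to the order `lt` and the residue map `r`:
it is a removable `i`-node, and for every `i`-node `η` above it, the number of addable
`i`-nodes in the interval `(γ, η]` does not exceed the number of removable `i`-nodes there.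
This is equivalent to surviving the `RA`-deletion process. -/
def NormalNode {α : Type*} (D : Finset Node) (lt : Node → Node → Prop)
    (r : Node → α) (i : α) (γ : Node) : Prop :=
  Removable D γ ∧ r γ = i ∧
  ∀ η : Node, r η = i → lt γ η →
    {x : Node | Addable D x ∧ r x = i ∧ lt γ x ∧ (lt x η ∨ x = η)}.ncard ≤
    {x : Node | Removable D x ∧ r x = i ∧ lt γ x ∧ (lt x η ∨ x = η)}.ncard

/-- `γ` is the good `i`-node of `D`: the minimal normal `i`-node for the order `lt`. -/
def GoodNode {α : Type*} (D : Finset Node) (lt : Node → Node → Prop)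
    (r : Node → α) (i : α) (γ : Node) : Prop :=
  NormalNode D lt r i γ ∧ ∀ δ : Node, NormalNode D lt r i δ → δ = γ ∨ lt γ δ

/-- The recursively defined class of bipartitions labelling the crystal:
the empty bipartition has rank `0`, and a bipartition of rank `n + 1` belongs iff
removing some good `i`-node yields a member of rank `n`. -/
inductive CrystalSet {α : Type*} (lt : Node → Node → Prop) (r : Node → α) :
    ℕ → Finset Node → Prop
  | empty : CrystalSet lt r 0 ∅
  | step {n : ℕ} {D : Finset Node} {γ : Node} (i : α) :
      IsDiagram D → GoodNode D lt r i γ →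
      CrystalSet lt r n (D.erase γ) → CrystalSet lt r (n + 1) D

/-- The set `Φ_{e,n}^{(s₀,s₁)}` of Uglov bipartitions. -/
def UglovSet (e : ℕ) (s : Fin 2 → ℤ) : ℕ → Finset Node → Prop :=
  CrystalSet (chargeLT s) (res e s)

/-- The set `Φ_{e,n}^{(v₀,v₁)₊}` of positive Kleshchev bipartitions. -/
def KleshchevPos (e : ℕ) (v : Fin 2 → ℤ) : ℕ → Finset Node → Prop :=
  CrystalSet posLT (res e v)

/-- The set `Φ_{e,n}^{(v₀,v₁)₋}` of negative Kleshchev bipartitions. -/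
def KleshchevNeg (e : ℕ) (v : Fin 2 → ℤ) : ℕ → Finset Node → Prop :=
  CrystalSet negLT (res e v)

/-- Swapping the two components of a bipartition: `(λ⁽⁰⁾,λ⁽¹⁾) ↦ (λ⁽¹⁾,λ⁽⁰⁾)`. -/
def swapDiagram (D : Finset Node) : Finset Node :=
  D.image (fun γ => (γ.1, γ.2.1, γ.2.2 + 1))

/-! ### Symbols -/

/-- `beta s m D c j` is the `j`-th entry `β^(c)_j = λ^(c)_j − j + s_c + m` of the
`s`-symbol of `D`, for `1 ≤ j ≤ m + s_c`. -/
def beta (s : Fin 2 → ℕ) (m : ℕ) (D : Finset Node) (c : Fin 2) (j : ℕ) : ℕ :=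
  part D c j + (m + s c) - j

/-- The multiset of entries of the row `β^(c)` of the `s`-symbol. -/
def rowM (s : Fin 2 → ℕ) (m : ℕ) (D : Finset Node) (c : Fin 2) : Multiset ℕ :=
  (Finset.Icc 1 (m + s c)).val.map (beta s m D c)

/-- The list of the values `θ(β⁽⁰⁾_{m+s₀}), θ(β⁽⁰⁾_{m+s₀-1}), …` chosen greedily:
at step `k` (handling `p = m + s₀ - k`) we choose the largest entry of the top row not yet
used that is `≤ β⁽⁰⁾_p`. -/
def thetaList (s : Fin 2 → ℕ) (m : ℕ) (D : Finset Node) : ℕ → List ℕ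
  | 0 => []
  | k + 1 =>
      let prev := thetaList s m D k
      prev ++ [((((Finset.Icc 1 (m + s 1)).image (beta s m D 1)).filter
          (fun y => y ∉ prev ∧ y ≤ beta s m D 0 (m + s 0 - k))).max.unbotD 0)]

/-- The greedy injection `θ`, as a function of the index `p ∈ {1, …, m + s₀}`:
`theta s m D p = θ(β⁽⁰⁾_p)`. -/
def theta (s : Fin 2 → ℕ) (m : ℕ) (D : Finset Node) (p : ℕ) : ℕ :=
  (thetaList s m D (m + s 0)).getD (m + s 0 - p) 0

/-- The bottom row of the symbol obtained by exchanging the entries of every pair: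
it is the multiset of the values `θ(β⁽⁰⁾_p)`. -/
def bottomRowNew (s : Fin 2 → ℕ) (m : ℕ) (D : Finset Node) : Multiset ℕ :=
  (Finset.Icc 1 (m + s 0)).val.map (theta s m D)

/-- The top row of the symbol obtained by exchanging the entries of every pair:
all entries of both rows that did not go to the new bottom row. -/
def topRowNew (s : Fin 2 → ℕ) (m : ℕ) (D : Finset Node) : Multiset ℕ :=
  (rowM s m D 0 + rowM s m D 1) - bottomRowNew s m D

/-- The rows of the symbol of `Υ(λ)`. -/
def newRow (s : Fin 2 → ℕ) (m : ℕ) (D : Finset Node) (c : Fin 2) : Multiset ℕ :=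
  if c = 0 then bottomRowNew s m D else topRowNew s m D

/-- The `j`-th largest entry of a multiset of naturals (`j ≥ 1`). -/
def rowEntry (B : Multiset ℕ) (j : ℕ) : ℕ :=
  (B.sort (· ≤ ·)).getD (Multiset.card B - j) 0

/-- The `j`-th part of the partition encoded by a multiset of `card B` distinct
beta-numbers: `λ_j = (j-th largest entry) + j - card B`. -/
def rowPart (B : Multiset ℕ) (j : ℕ) : ℕ :=
  if 1 ≤ j ∧ j ≤ Multiset.card B then rowEntry B j + j - Multiset.card B else 0

/-- The Young diagram of the bipartition with parts `p`, within the box of size `N`. -/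
def toDiagram (p : Fin 2 → ℕ → ℕ) (N : ℕ) : Finset Node :=
  ((Finset.Icc 1 N) ×ˢ (Finset.Icc 1 N) ×ˢ (Finset.univ : Finset (Fin 2))).filter
    (fun γ => γ.2.1 ≤ p γ.2.2 γ.1)

/-- The map `Υ_{(s₀,s₁)}`: exchange the two entries of every pair of the `s`-symbol and
reorder the rows; `Upsilon s m D` is the diagram of the resulting bipartition. -/
def Upsilon (s : Fin 2 → ℕ) (m : ℕ) (D : Finset Node) : Finset Node :=
  toDiagram (fun c j => rowPart (newRow s m D c) j) D.card

/-- The list of values `τ(α⁽⁰⁾_1), τ(α⁽⁰⁾_2), …` chosen greedily: at step `k + 1`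
(handling `p = k + 1`) we choose the smallest entry of the top row `Top` not yet used
that is `≥ b (k+1)`, where `b p` is the `p`-th entry of the bottom row. -/
def tauList (Top : Finset ℕ) (b : ℕ → ℕ) : ℕ → List ℕ
  | 0 => []
  | k + 1 =>
      let prev := tauList Top b k
      prev ++ [((Top.filter (fun y => y ∉ prev ∧ b (k + 1) ≤ y)).min.untopD 0)]

/-- The greedy injection `τ`, as a function of the index `p ∈ {1, …, P}`. -/
def tau (Top : Finset ℕ) (b : ℕ → ℕ) (P : ℕ) (p : ℕ) : ℕ :=
  (tauList Top b P).getD (p - 1) 0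

end UglovPaper
namespace UglovPaper

/-!
Both sets are cut out by the same recursion, so it suffices that for every bipartition of rank
at most `n` the two orders have the same good nodes. The `RA`-cancellation only ever compares
two `i`-nodes of which at least one is removable, so it is enough that the orders agree on such
pairs (and that both are total on addable nodes).

Inside one component both orders compare addable/removable nodes by their rows: contents strictly
decrease down the rim, and the two candidates in a common row have adjacent contents, hence
different residues because `e > 1`. Across components, a node of `λ^(c)` has content at distance
less than `|λ^(c)|` from `s_c`, and an addable node at distance at most `|λ^(c)|`. So for `i`-nodes
`x` of `λ^(0)` and `y` of `λ^(1)`, one of them removable, `cont x - cont y > s₀ - s₁ - n ≥ -e`;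
as `e` divides this difference, it is `≥ 0`, which is exactly what the positive order prescribes.
-/

def compSize (D : Finset Node) (c : Fin 2) : ℕ := #{γ ∈ D | ncomp γ = c}

instance (s : Fin 2 → ℤ) : IsStrictOrder Node (chargeLT s) where
  irrefl _ := by unfold chargeLT; omega
  trans _ _ _ := by unfold chargeLT; omega

instance : IsStrictOrder Node posLT where
  irrefl _ := by unfold posLT; omega
  trans _ _ _ := by unfold posLT; omega

section Diagrams

variable {D : Finset Node}

lemma compSize_zero_add_compSize_one (D : Finset Node) : compSize D 0 + compSize D 1 = #D := by
  have h : ∀ γ : Node, ¬ ncomp γ = 0 ↔ ncomp γ = 1 := fun γ => by omega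
  simp only [compSize, ← h]
  exact card_filter_add_card_filter_not _

lemma compSize_insert_of_notMem {x : Node} (hx : x ∉ D) :
    compSize (insert x D) (ncomp x) = compSize D (ncomp x) + 1 := by
  rw [compSize, filter_insert, if_pos rfl, card_insert_of_notMem (by simp [hx]), compSize]

lemma IsDiagram.mem_iff_le_part (hD : IsDiagram D) {a b : ℕ} {c : Fin 2} :
    (a, b, c) ∈ D ↔ 1 ≤ b ∧ b ≤ part D c a := by
  have hinj : Function.Injective (fun j : ℕ => ((a, j, c) : Node)) := fun j j' h => by
    simpa using h
  constructor
  · intro h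
    refine ⟨(hD.1 _ h).2, ?_⟩
    have hsub : (Icc 1 b).image (fun j => ((a, j, c) : Node)) ⊆
        {γ ∈ D | nrow γ = a ∧ ncomp γ = c} := by
      intro γ hγ
      obtain ⟨j, hj, rfl⟩ := mem_image.1 hγ
      rw [mem_Icc] at hj
      exact mem_filter.2 ⟨hD.2.1 _ h j hj.1 hj.2, rfl, rfl⟩
    simpa [part, card_image_of_injective _ hinj] using card_le_card hsub
  · rintro ⟨hb, hle⟩
    by_contra hnot
    have hsub : {γ ∈ D | nrow γ = a ∧ ncomp γ = c} ⊆
        (Icc 1 (b - 1)).image (fun j => ((a, j, c) : Node)) := by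
      rintro ⟨a', j, c'⟩ hγ
      obtain ⟨hmem, ha', hc'⟩ := mem_filter.1 hγ
      simp only [nrow, ncomp] at ha' hc'
      subst ha' hc'
      refine mem_image.2 ⟨j, mem_Icc.2 ⟨(hD.1 _ hmem).2, ?_⟩, rfl⟩
      by_contra hj
      exact hnot (hD.2.1 _ hmem b hb (by simp only [ncol]; omega))
    have := (card_le_card hsub).trans card_image_le
    simp only [Nat.card_Icc] at this
    rw [part] at hle
    omega

lemma IsDiagram.part_succ_le (hD : IsDiagram D) {c : Fin 2} {a : ℕ} (ha : 1 ≤ a) :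
    part D c (a + 1) ≤ part D c a := by
  rcases Nat.eq_zero_or_pos (part D c (a + 1)) with h | h
  · omega
  · have hmem := hD.2.2 _ (hD.mem_iff_le_part.2 ⟨h, le_rfl⟩) (by simp only [nrow]; omega)
    exact (hD.mem_iff_le_part.1 hmem).2

lemma IsDiagram.part_anti (hD : IsDiagram D) {c : Fin 2} {a a' : ℕ} (ha : 1 ≤ a)
    (h : a ≤ a') : part D c a' ≤ part D c a := by
  induction a', h using Nat.le_induction with
  | base => exact le_rfl
  | succ k hk ih => exact (hD.part_succ_le (by omega)).trans ih

lemma IsDiagram.nrow_le_compSize (hD : IsDiagram D) {a b : ℕ} {c : Fin 2} (h : (a, b, c) ∈ D) :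
    a ≤ compSize D c := by
  have hinj : Function.Injective (fun j : ℕ => ((j, 1, c) : Node)) := fun j j' h => by
    simpa using h
  have hb := hD.mem_iff_le_part.1 h
  have hsub : (Icc 1 a).image (fun j => ((j, 1, c) : Node)) ⊆ {γ ∈ D | ncomp γ = c} := by
    intro γ hγ
    obtain ⟨j, hj, rfl⟩ := mem_image.1 hγ
    rw [mem_Icc] at hj
    have := hD.part_anti (c := c) hj.1 hj.2
    exact mem_filter.2 ⟨hD.mem_iff_le_part.2 ⟨le_rfl, by omega⟩, rfl⟩
  simpa [compSize, card_image_of_injective _ hinj] using card_le_card hsub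

lemma IsDiagram.ncol_le_compSize (hD : IsDiagram D) {a b : ℕ} {c : Fin 2} (h : (a, b, c) ∈ D) :
    b ≤ compSize D c :=
  (hD.mem_iff_le_part.1 h).2.trans <| card_le_card <| monotone_filter_right _ fun _ _ h => h.2

lemma IsDiagram.removable_spec (hD : IsDiagram D) {a b : ℕ} {c : Fin 2}
    (h : Removable D (a, b, c)) : 1 ≤ a ∧ b = part D c a ∧ part D c (a + 1) < b := by
  obtain ⟨hmem, hD'⟩ := h
  have hb := hD.mem_iff_le_part.1 hmem
  have ha : 1 ≤ a := (hD.1 _ hmem).1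
  have hgone := notMem_erase (a, b, c) D
  refine ⟨ha, le_antisymm hb.2 ?_, ?_⟩
  · by_contra! hlt
    have hright : ((a, b + 1, c) : Node) ∈ D.erase (a, b, c) :=
      mem_erase.2 ⟨by simp, hD.mem_iff_le_part.2 ⟨by omega, hlt⟩⟩
    exact hgone (hD'.2.1 _ hright b hb.1 (by simp [ncol]))
  · by_contra! hge
    have hbelow : ((a + 1, b, c) : Node) ∈ D.erase (a, b, c) :=
      mem_erase.2 ⟨by simp, hD.mem_iff_le_part.2 ⟨hb.1, hge⟩⟩
    exact hgone (hD'.2.2 _ hbelow (by simp only [nrow]; omega))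

lemma IsDiagram.addable_spec (hD : IsDiagram D) {a b : ℕ} {c : Fin 2}
    (h : Addable D (a, b, c)) : 1 ≤ a ∧ b = part D c a + 1 := by
  obtain ⟨hnot, hD'⟩ := h
  have hself := hD'.1 _ (mem_insert_self (a, b, c) D)
  simp only [nrow, ncol] at hself
  refine ⟨hself.1, le_antisymm ?_ ?_⟩
  · by_contra! hgt
    have hleft : ((a, b - 1, c) : Node) ∈ D := by
      have := hD'.2.1 _ (mem_insert_self _ D) (b - 1) (by omega) (by simp [ncol])
      exact (mem_insert.1 this).resolve_left (by simp; omega)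
    have := (hD.mem_iff_le_part.1 hleft).2
    omega
  · by_contra! hle
    exact hnot (hD.mem_iff_le_part.2 ⟨hself.2, by omega⟩)

lemma IsDiagram.removable_or_addable_spec (hD : IsDiagram D) {a b : ℕ} {c : Fin 2}
    (h : Removable D (a, b, c) ∨ Addable D (a, b, c)) :
    1 ≤ a ∧ part D c (a + 1) < b ∧ (b = part D c a ∨ b = part D c a + 1) := by
  rcases h with h | h
  · obtain ⟨ha, hb, hlt⟩ := hD.removable_spec h
    exact ⟨ha, hlt, .inl hb⟩
  · obtain ⟨ha, hb⟩ := hD.addable_spec h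
    have := hD.part_succ_le (c := c) ha
    exact ⟨ha, by omega, .inr hb⟩

lemma IsDiagram.eq_of_addable_of_nrow_eq (hD : IsDiagram D) {x y : Node} (hx : Addable D x)
    (hy : Addable D y) (hc : ncomp x = ncomp y) (hr : nrow x = nrow y) : x = y := by
  obtain ⟨a, b, c⟩ := x
  obtain ⟨a', b', c'⟩ := y
  simp only [nrow, ncomp] at hc hr
  subst hc hr
  rw [(hD.addable_spec hx).2, (hD.addable_spec hy).2]

variable {s : Fin 2 → ℤ}

lemma IsDiagram.cont_lt_cont_of_nrow_lt (hD : IsDiagram D) {x y : Node}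
    (hx : Removable D x ∨ Addable D x) (hy : Removable D y ∨ Addable D y)
    (hc : ncomp x = ncomp y) (hr : nrow y < nrow x) : cont s x < cont s y := by
  obtain ⟨a, b, c⟩ := x
  obtain ⟨a', b', c'⟩ := y
  simp only [nrow, ncomp] at hc hr
  subst hc
  obtain ⟨-, -, hb⟩ := hD.removable_or_addable_spec hx
  obtain ⟨-, hb', -⟩ := hD.removable_or_addable_spec hy
  have := hD.part_anti (c := c) (a := a' + 1) (a' := a) (by omega) (by omega)
  simp only [cont, nrow, ncol, ncomp]
  omega

lemma dvd_cont_sub_of_res_eq {e : ℕ} {x y : Node} (h : res e s x = res e s y) :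
    (e : ℤ) ∣ cont s y - cont s x :=
  (ZMod.intCast_eq_intCast_iff_dvd_sub _ _ _).1 h

lemma IsDiagram.eq_of_nrow_eq_of_res_eq (hD : IsDiagram D) {e : ℕ} (he : 1 < e) {x y : Node}
    (hx : Removable D x ∨ Addable D x) (hy : Removable D y ∨ Addable D y)
    (hc : ncomp x = ncomp y) (hr : nrow x = nrow y) (hres : res e s x = res e s y) : x = y := by
  obtain ⟨a, b, c⟩ := x
  obtain ⟨a', b', c'⟩ := y
  simp only [nrow, ncomp] at hc hr
  subst hc hr
  obtain ⟨-, -, hb⟩ := hD.removable_or_addable_spec hx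
  obtain ⟨-, -, hb'⟩ := hD.removable_or_addable_spec hy
  have hzero := Int.eq_zero_of_abs_lt_dvd (dvd_cont_sub_of_res_eq hres)
    (by simp only [cont, nrow, ncol, ncomp]; rw [abs_lt]; omega)
  simp only [cont, nrow, ncol, ncomp] at hzero
  obtain rfl : b = b' := by omega
  rfl

lemma IsDiagram.abs_cont_sub_lt (hD : IsDiagram D) {x : Node} (hx : x ∈ D) :
    |cont s x - s (ncomp x)| < compSize D (ncomp x) := by
  obtain ⟨a, b, c⟩ := x
  have ha := hD.nrow_le_compSize hx
  have hb := hD.ncol_le_compSize hx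
  have hpos := hD.1 _ hx
  simp only [nrow, ncol, ncomp, cont] at hpos ⊢
  rw [abs_lt]
  omega

lemma Addable.abs_cont_sub_le {x : Node} (hx : Addable D x) :
    |cont s x - s (ncomp x)| ≤ compSize D (ncomp x) := by
  have := hx.2.abs_cont_sub_lt (s := s) (mem_insert_self x D)
  rw [compSize_insert_of_notMem hx.1, Nat.cast_succ] at this
  exact Int.lt_add_one_iff.1 this

lemma IsDiagram.cont_le_cont_of_ncomp (hD : IsDiagram D) {e : ℕ}
    (hcard : (#D : ℤ) ≤ s 0 - s 1 + e) {x y : Node}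
    (hx : Removable D x ∨ Addable D x) (hy : Removable D y ∨ Addable D y)
    (hone : Removable D x ∨ Removable D y) (hx0 : ncomp x = 0) (hy1 : ncomp y = 1)
    (hres : res e s x = res e s y) : cont s y ≤ cont s x := by
  have hsize := compSize_zero_add_compSize_one D
  have hbound : ∀ z, (Removable D z ∨ Addable D z) →
      |cont s z - s (ncomp z)| ≤ compSize D (ncomp z) := fun z hz =>
    hz.elim (fun h => (hD.abs_cont_sub_lt h.1).le) Addable.abs_cont_sub_le
  have hbx := abs_le.1 (hbound x hx)
  have hby := abs_le.1 (hbound y hy)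
  rw [hx0] at hbx
  rw [hy1] at hby
  have hlt : cont s y - cont s x < e := by
    rcases hone with h | h
    · have := abs_lt.1 (hD.abs_cont_sub_lt (s := s) h.1)
      rw [hx0] at this
      omega
    · have := abs_lt.1 (hD.abs_cont_sub_lt (s := s) h.1)
      rw [hy1] at this
      omega
  by_contra! hgt
  have := Int.eq_zero_of_abs_lt_dvd (dvd_cont_sub_of_res_eq hres) (by rw [abs_lt]; omega)
  omega

lemma IsDiagram.chargeLT_iff_posLT (hD : IsDiagram D) {e : ℕ} (he : 1 < e)
    (hcard : (#D : ℤ) ≤ s 0 - s 1 + e) {x y : Node}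
    (hx : Removable D x ∨ Addable D x) (hy : Removable D y ∨ Addable D y)
    (hone : Removable D x ∨ Removable D y) (hres : res e s x = res e s y) :
    chargeLT s x y ↔ posLT x y := by
  rcases eq_or_ne (ncomp x) (ncomp y) with hc | hc
  · rcases lt_trichotomy (nrow x) (nrow y) with hr | hr | hr
    · have := hD.cont_lt_cont_of_nrow_lt (s := s) hy hx hc.symm hr
      simp only [chargeLT, posLT, hc]
      omega
    · obtain rfl := hD.eq_of_nrow_eq_of_res_eq he hx hy hc hr hres
      exact iff_of_false (irrefl x) (irrefl x)
    · exact iff_of_true (.inl (hD.cont_lt_cont_of_nrow_lt hx hy hc hr)) (.inr ⟨hc, hr⟩)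
  · rcases (by omega : ncomp x = 0 ∧ ncomp y = 1 ∨ ncomp x = 1 ∧ ncomp y = 0)
      with ⟨hx0, hy1⟩ | ⟨hx1, hy0⟩
    · have := hD.cont_le_cont_of_ncomp hcard hx hy hone hx0 hy1 hres
      simp only [chargeLT, posLT, hx0, hy1]
      omega
    · have := hD.cont_le_cont_of_ncomp hcard hy hx hone.symm hy0 hx1 hres.symm
      simp only [chargeLT, posLT, hx1, hy0]
      omega

lemma IsDiagram.chargeLT_total_of_addable (hD : IsDiagram D) {x y : Node} (hx : Addable D x)
    (hy : Addable D y) (hne : x ≠ y) : chargeLT s x y ∨ chargeLT s y x := by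
  rcases lt_trichotomy (cont s x) (cont s y) with h | h | h
  · exact .inl (.inl h)
  · rcases lt_trichotomy (ncomp x) (ncomp y) with hc | hc | hc
    · exact .inr (.inr ⟨h.symm, hc⟩)
    · exfalso
      rcases lt_trichotomy (nrow x) (nrow y) with hr | hr | hr
      · exact (hD.cont_lt_cont_of_nrow_lt (.inr hy) (.inr hx) hc.symm hr).ne' h
      · exact hne (hD.eq_of_addable_of_nrow_eq hx hy hc hr)
      · exact (hD.cont_lt_cont_of_nrow_lt (.inr hx) (.inr hy) hc hr).ne h
    · exact .inl (.inr ⟨h, hc⟩)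
  · exact .inr (.inl h)

lemma IsDiagram.posLT_total_of_addable (hD : IsDiagram D) {x y : Node} (hx : Addable D x)
    (hy : Addable D y) (hne : x ≠ y) : posLT x y ∨ posLT y x := by
  rcases eq_or_ne (ncomp x) (ncomp y) with hc | hc
  · rcases lt_trichotomy (nrow x) (nrow y) with hr | hr | hr
    · exact .inr (.inr ⟨hc.symm, hr⟩)
    · exact absurd (hD.eq_of_addable_of_nrow_eq hx hy hc hr) hne
    · exact .inl (.inr ⟨hc, hr⟩)
  · exact hc.lt_or_gt.symm.imp .inl .inl

lemma finite_setOf_addable (D : Finset Node) : {x | Addable D x}.Finite := by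
  refine (Set.finite_Iic ((#D + 1, #D + 1, 1) : Node)).subset ?_
  rintro ⟨a, b, c⟩ hx
  have hsize : compSize (insert (a, b, c) D) c ≤ #D + 1 :=
    (card_filter_le _ _).trans (card_insert_le _ _)
  have ha := hx.2.nrow_le_compSize (mem_insert_self _ D)
  have hb := hx.2.ncol_le_compSize (mem_insert_self _ D)
  exact ⟨by simp only; omega, by simp only; omega, Fin.le_last c⟩

end Diagrams

lemma _root_.Set.Finite.exists_forall_not_rel {β : Type*} {rel : β → β → Prop}
    [IsStrictOrder β rel] {S : Set β} (hS : S.Finite) (hne : S.Nonempty) :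
    ∃ m ∈ S, ∀ x ∈ S, ¬ rel m x := by
  let := partialOrderOfSO rel
  obtain ⟨m, hm⟩ := hS.exists_maximal hne
  exact ⟨m, hm.prop, fun x hx => hm.not_gt hx⟩

section Transfer

variable {α : Type*} {D : Finset Node} {lt₁ lt₂ : Node → Node → Prop} {r : Node → α} {i : α}

/-- For `η` above `γ` in the second order, compare with the interval `(γ, m]` of the first
order, where `m` is the largest addable `i`-node of `(γ, η]` for the first order. -/
lemma NormalNode.of_agree [IsStrictOrder Node lt₁] [IsTrans Node lt₂]
    (hfin : {x | Addable D x}.Finite)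
    (htot : ∀ x y, Addable D x → Addable D y → x ≠ y → lt₁ x y ∨ lt₁ y x)
    (hagree : ∀ x y, (Removable D x ∨ Addable D x) → (Removable D y ∨ Addable D y) →
      (Removable D x ∨ Removable D y) → r x = r y → (lt₁ x y ↔ lt₂ x y))
    {γ : Node} (h : NormalNode D lt₁ r i γ) : NormalNode D lt₂ r i γ := by
  obtain ⟨hγ, hγi, hcount⟩ := h
  refine ⟨hγ, hγi, fun η _ _ => ?_⟩
  have above_γ : ∀ x, (Removable D x ∨ Addable D x) → r x = i → (lt₁ γ x ↔ lt₂ γ x) :=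
    fun x hx hxi => hagree γ x (.inl hγ) hx (.inl hγ) (hγi.trans hxi.symm)
  set A := {x | Addable D x ∧ r x = i ∧ lt₂ γ x ∧ (lt₂ x η ∨ x = η)}
  have hA : A.Finite := hfin.subset fun x hx => hx.1
  rcases A.eq_empty_or_nonempty with hempty | hne
  · simp [hempty]
  obtain ⟨m, ⟨hm, hmi, hγm, hmη⟩, hmax⟩ := hA.exists_forall_not_rel (rel := lt₁) hne
  calc A.ncard
      ≤ {x | Addable D x ∧ r x = i ∧ lt₁ γ x ∧ (lt₁ x m ∨ x = m)}.ncard := by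
        refine Set.ncard_le_ncard ?_ (hfin.subset fun x hx => hx.1)
        rintro x ⟨hx, hxi, hγx, hxη⟩
        refine ⟨hx, hxi, (above_γ x (.inr hx) hxi).2 hγx, ?_⟩
        by_cases hxm : x = m
        · exact .inr hxm
        · exact .inl ((htot x m hx hm hxm).resolve_right (hmax x ⟨hx, hxi, hγx, hxη⟩))
    _ ≤ {x | Removable D x ∧ r x = i ∧ lt₁ γ x ∧ (lt₁ x m ∨ x = m)}.ncard :=
        hcount m hmi ((above_γ m (.inr hm) hmi).2 hγm)
    _ ≤ {x | Removable D x ∧ r x = i ∧ lt₂ γ x ∧ (lt₂ x η ∨ x = η)}.ncard := by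
        refine Set.ncard_le_ncard ?_ (D.finite_toSet.subset fun x hx => hx.1.1)
        rintro x ⟨hx, hxi, hγx, hxm⟩
        have hxm₁ : lt₁ x m := hxm.resolve_right (by rintro rfl; exact hm.1 hx.1)
        have hxm₂ := (hagree x m (.inl hx) (.inr hm) (.inl hx) (hxi.trans hmi.symm)).1 hxm₁
        refine ⟨hx, hxi, (above_γ x (.inl hx) hxi).1 hγx, .inl ?_⟩
        rcases hmη with hmη | rfl
        · exact _root_.trans hxm₂ hmη
        · exact hxm₂

lemma normalNode_iff_of_agree [IsStrictOrder Node lt₁] [IsStrictOrder Node lt₂]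
    (hfin : {x | Addable D x}.Finite)
    (htot₁ : ∀ x y, Addable D x → Addable D y → x ≠ y → lt₁ x y ∨ lt₁ y x)
    (htot₂ : ∀ x y, Addable D x → Addable D y → x ≠ y → lt₂ x y ∨ lt₂ y x)
    (hagree : ∀ x y, (Removable D x ∨ Addable D x) → (Removable D y ∨ Addable D y) →
      (Removable D x ∨ Removable D y) → r x = r y → (lt₁ x y ↔ lt₂ x y))
    {γ : Node} : NormalNode D lt₁ r i γ ↔ NormalNode D lt₂ r i γ :=
  ⟨.of_agree hfin htot₁ hagree,
    .of_agree hfin htot₂ fun x y hx hy hone hr => (hagree x y hx hy hone hr).symm⟩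

lemma goodNode_iff_of_agree [IsStrictOrder Node lt₁] [IsStrictOrder Node lt₂]
    (hfin : {x | Addable D x}.Finite)
    (htot₁ : ∀ x y, Addable D x → Addable D y → x ≠ y → lt₁ x y ∨ lt₁ y x)
    (htot₂ : ∀ x y, Addable D x → Addable D y → x ≠ y → lt₂ x y ∨ lt₂ y x)
    (hagree : ∀ x y, (Removable D x ∨ Addable D x) → (Removable D y ∨ Addable D y) →
      (Removable D x ∨ Removable D y) → r x = r y → (lt₁ x y ↔ lt₂ x y))
    {γ : Node} : GoodNode D lt₁ r i γ ↔ GoodNode D lt₂ r i γ := by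
  simp only [GoodNode, normalNode_iff_of_agree hfin htot₁ htot₂ hagree]
  refine and_congr_right fun hγ => forall_congr' fun δ => imp_congr_right fun hδ => ?_
  exact or_congr_right <|
    hagree γ δ (.inl hγ.1) (.inl hδ.1) (.inl hγ.1) (hγ.2.1.trans hδ.2.1.symm)

end Transfer

section Crystal

variable {α : Type*} {lt₁ lt₂ : Node → Node → Prop} {r : Node → α} {N : ℕ}

lemma CrystalSet.card_eq {n : ℕ} {D : Finset Node} (h : CrystalSet lt₁ r n D) : #D = n := by
  induction h with
  | empty => rfl
  | step _ _ hγ _ ih => rw [← card_erase_add_one hγ.1.1.1, ih]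

lemma CrystalSet.of_goodNode_imp
    (hgood : ∀ D, IsDiagram D → #D ≤ N → ∀ i γ, GoodNode D lt₁ r i γ → GoodNode D lt₂ r i γ)
    {n : ℕ} {D : Finset Node} (h : CrystalSet lt₁ r n D) (hn : n ≤ N) :
    CrystalSet lt₂ r n D := by
  induction h with
  | empty => exact .empty
  | @step m E γ i hE hγ hprev ih =>
    have hcard : #E = m + 1 := by rw [← card_erase_add_one hγ.1.1.1, hprev.card_eq]
    exact .step i hE (hgood E hE (by omega) i γ hγ) (ih (by omega))

lemma crystalSet_iff_of_goodNode_iff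
    (hgood : ∀ D, IsDiagram D → #D ≤ N → ∀ i γ, GoodNode D lt₁ r i γ ↔ GoodNode D lt₂ r i γ)
    {n : ℕ} (hn : n ≤ N) (D : Finset Node) : CrystalSet lt₁ r n D ↔ CrystalSet lt₂ r n D :=
  ⟨fun h => h.of_goodNode_imp (fun D hD hN i γ => (hgood D hD hN i γ).1) hn,
    fun h => h.of_goodNode_imp (fun D hD hN i γ => (hgood D hD hN i γ).2) hn⟩

end Crystal

lemma IsDiagram.goodNode_chargeLT_iff_posLT {D : Finset Node} (hD : IsDiagram D) {e : ℕ}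
    (he : 1 < e) {s : Fin 2 → ℤ} (hcard : (#D : ℤ) ≤ s 0 - s 1 + e) {i : ZMod e} {γ : Node} :
    GoodNode D (chargeLT s) (res e s) i γ ↔ GoodNode D posLT (res e s) i γ :=
  goodNode_iff_of_agree (finite_setOf_addable D)
    (fun _ _ => hD.chargeLT_total_of_addable) (fun _ _ => hD.posLT_total_of_addable)
    (fun _ _ => hD.chargeLT_iff_posLT he hcard)

lemma res_eq_of_modEq {e : ℕ} {s v : Fin 2 → ℤ} (h : ∀ c, v c ≡ s c [ZMOD e]) :
    res e v = res e s := by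
  funext γ
  exact (ZMod.intCast_eq_intCast_iff _ _ _).2 ((h (ncomp γ)).add_left _)

theorem uglovSet_eq_kleshchevPos_general (e : ℕ) (he : 1 < e) (n : ℕ) (s₀ s₁ v₀ v₁ : ℤ)
    (h₀ : Int.ModEq (e : ℤ) v₀ s₀) (h₁ : Int.ModEq (e : ℤ) v₁ s₁)
    (hn : (n : ℤ) - 1 - e < s₀ - s₁) :
    ∀ D : Finset Node, UglovSet e ![s₀, s₁] n D ↔ KleshchevPos e ![v₀, v₁] n D := by
  have hres : res e ![v₀, v₁] = res e ![s₀, s₁] := res_eq_of_modEq (Fin.forall_fin_two.2 ⟨h₀, h₁⟩)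
  rw [UglovSet, KleshchevPos, hres]
  refine crystalSet_iff_of_goodNode_iff (fun D hD hcard i γ => ?_) le_rfl
  refine hD.goodNode_chargeLT_iff_posLT he ?_
  simp only [Matrix.cons_val_zero, Matrix.cons_val_one]
  omega

/-- if `s₀ - s₁ > n - 1 - e` then `Φ_{e,n}^{(s₀,s₁)} = Φ_{e,n}^{(v₀,v₁)₊}`. -/
theorem uglovSet_eq_kleshchevPos (e : ℕ) (he : 1 < e) (n : ℕ) (s₀ s₁ v₀ v₁ : ℤ)
    (hv₀ : 0 ≤ v₀ ∧ v₀ < e) (hv₁ : 0 ≤ v₁ ∧ v₁ < e)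
    (h₀ : Int.ModEq (e : ℤ) v₀ s₀) (h₁ : Int.ModEq (e : ℤ) v₁ s₁)
    (hn : (n : ℤ) - 1 - e < s₀ - s₁) :
    ∀ D : Finset Node, UglovSet e ![s₀, s₁] n D ↔ KleshchevPos e ![v₀, v₁] n D :=
  uglovSet_eq_kleshchevPos_general e he n s₀ s₁ v₀ v₁ h₀ h₁ hn

end UglovPaper
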